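/- Let C = (c_{ij}) be an (n-1)×n matrix with entries in ℝ ∪ {−∞}, and for k ∈ [n] let per C_{|k)} = max over bijections σ : [n-1] → [n]∖{k} of Σ_{i∈[n-1]} c_{iσ(i)}. Consider the primal transportation problem: maximize Σ_{ij} c_{ij}·y_{ij} over nonnegative real (n-1)×n matrices y with every row sum equal to n, every column sum equal to n-1, and y_{ij} = 0 whenever c_{ij} = −∞; and its dual: minimize n·Σ_{i∈[n-1]} u_i + (n-1)·Σ_{j∈[n]} v_j over u ∈ ℝ^{n-1}, v ∈ ℝ^n with c_{ij} ≤ u_i + v_j whenever c_{ij} is finite. Then: (i) the primal problem is feasible if and only if per C_{|k)} is finite for every k ∈ [n]; (ii) when this is the case, the dual problem has an optimal solution, any two optimal dual solutions (u,v) and (u',v') satisfy u'_i = u_i + t and v'_j = v_j − t for all i, j, for some constant t ∈ ℝ, and every optimal dual solution (u,v) satisfies per C_{|k)} = Σ_{i∈[n-1]} u_i + Σ_{j∈[n], j≠k} v_j for every k ∈ [n]. -/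

import Mathlib

/-!
Put a row of ones on top of a primal feasible `y`: the resulting square matrix has all line
sums `n`, so by Birkhoff's theorem it is a nonnegative combination of permutation matrices. A
permutation `σ` in the support sends the extra row to some column `k` and the other rows to a
finite assignment avoiding `k`, and the weights of the `σ` with `σ 0 = k` add up to `1`. This
gives finiteness of every `per C_{|k)}` and the bound `Σ c_{ij} y_{ij} ≤ Σ_k per C_{|k)}`.
Conversely, the sum of optimal assignments avoiding each column is primal feasible.

Write `p_k = per C_{|k)}`. The bound, applied to the graph of `f` plus the optimal assignments
avoiding the columns `f i`, gives `Σ_i max_j (c_{ij} + p_j) ≤ Σ_k p_k`. Hence `v = -p` and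
`u_i = max_j (c_{ij} + p_j) + δ`, with `δ ≥ 0` spreading the slack evenly, is dual feasible with
`Σ u + Σ_{j ≠ k} v_j = p_k` for all `k`. Weak duality summed over `k` makes it optimal and forces
the same equalities on every optimal `(u, v)`; they fix `v` up to a constant, and complementary
slackness along an optimal assignment then fixes `u`.
-/

open Finset

/-- The tropical Cramer permanent `per C_{|k)}` of an `m × (m+1)` matrix over
`ℝ ∪ {-∞}`: the value of the optimal assignment problem for the matrix obtained by
deleting column `k`. -/
noncomputable def cramerPer {m : ℕ} (C : Matrix (Fin m) (Fin (m + 1)) (WithBot ℝ))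
    (k : Fin (m + 1)) : WithBot ℝ :=
  Finset.univ.sup fun σ : Equiv.Perm (Fin m) => ∑ i, C i (k.succAbove (σ i))

/-- Feasibility for the primal transportation problem associated with `C`. -/
def primalFeasible {m : ℕ} (C : Matrix (Fin m) (Fin (m + 1)) (WithBot ℝ))
    (y : Matrix (Fin m) (Fin (m + 1)) ℝ) : Prop :=
  (∀ i j, 0 ≤ y i j) ∧ (∀ i, ∑ j, y i j = (m + 1 : ℝ)) ∧
  (∀ j, ∑ i, y i j = (m : ℝ)) ∧ ∀ i j, C i j = ⊥ → y i j = 0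

/-- Feasibility for the dual transportation problem: `c_{ij} ≤ u_i + v_j` whenever
`c_{ij}` is finite. -/
def dualFeasible {m : ℕ} (C : Matrix (Fin m) (Fin (m + 1)) (WithBot ℝ))
    (u : Fin m → ℝ) (v : Fin (m + 1) → ℝ) : Prop :=
  ∀ i j, C i j ≤ ((u i + v j : ℝ) : WithBot ℝ)

/-- The dual objective function `n·Σu + (n-1)·Σv` (here `n = m+1`). -/
def dualObj {m : ℕ} (u : Fin m → ℝ) (v : Fin (m + 1) → ℝ) : ℝ :=
  (m + 1 : ℝ) * ∑ i, u i + (m : ℝ) * ∑ j, v j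

/-- Optimality for the dual transportation problem. -/
def dualOptimal {m : ℕ} (C : Matrix (Fin m) (Fin (m + 1)) (WithBot ℝ))
    (u : Fin m → ℝ) (v : Fin (m + 1) → ℝ) : Prop :=
  dualFeasible C u v ∧
  ∀ u' v', dualFeasible C u' v' → dualObj u v ≤ dualObj u' v'

lemma WithBot.coe_unbotD_of_ne_bot {α : Type*} {x : WithBot α} (d : α) (hx : x ≠ ⊥) :
    ((x.unbotD d : α) : WithBot α) = x := by
  lift x to α using hx; rfl

lemma WithBot.sum_unbotD_le {ι α : Type*} [AddCommMonoid α] [LE α] {s : Finset ι}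
    {f : ι → WithBot α} {d a : α} (hf : ∀ i ∈ s, f i ≠ ⊥) (h : ∑ i ∈ s, f i ≤ a) :
    ∑ i ∈ s, (f i).unbotD d ≤ a := by
  rwa [← WithBot.coe_le_coe, WithBot.coe_sum,
    Finset.sum_congr rfl fun i hi => WithBot.coe_unbotD_of_ne_bot d (hf i hi)]

lemma Fin.exists_perm_succAbove_eq {m : ℕ} {g : Fin m → Fin (m + 1)} {k : Fin (m + 1)}
    (hg : Function.Injective g) (hk : ∀ i, g i ≠ k) :
    ∃ π : Equiv.Perm (Fin m), ∀ i, k.succAbove (π i) = g i := by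
  choose π hπ using fun i => Fin.exists_succAbove_eq (hk i)
  have hπ_inj : Function.Injective π := fun a b hab => hg (by rw [← hπ a, ← hπ b, hab])
  exact ⟨Equiv.ofBijective π (Finite.injective_iff_bijective.mp hπ_inj), hπ⟩

lemma Fin.sum_succAbove_perm {M : Type*} [AddCommMonoid M] {m : ℕ} (v : Fin (m + 1) → M)
    (k : Fin (m + 1)) (σ : Equiv.Perm (Fin m)) :
    ∑ i, v (k.succAbove (σ i)) = ∑ j ∈ univ.erase k, v j := by
  rw [Equiv.sum_comp σ fun i => v (k.succAbove i), ← Finset.compl_singleton,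
    ← Fin.image_succAbove_univ, Finset.sum_image fun _ _ _ _ h => Fin.succAbove_right_injective h]

def graphMatrix {ι κ : Type*} [DecidableEq κ] (g : ι → κ) : Matrix ι κ ℝ :=
  Matrix.of fun i j => if g i = j then 1 else 0

section graphMatrix

variable {ι κ : Type*} [DecidableEq κ]

lemma graphMatrix_nonneg (g : ι → κ) (i : ι) (j : κ) : 0 ≤ graphMatrix g i j := by
  simp only [graphMatrix, Matrix.of_apply]; split_ifs <;> norm_num

lemma sum_graphMatrix_row [Fintype κ] (g : ι → κ) (i : ι) : ∑ j, graphMatrix g i j = 1 := by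
  simp [graphMatrix]

lemma sum_mul_sum_smul_graphMatrix {T : Type*} [Fintype ι] [Fintype κ] [Fintype T]
    (w : T → ℝ) (g : T → ι → κ) (c : Matrix ι κ ℝ) :
    ∑ i, ∑ j, (∑ t, w t • graphMatrix (g t)) i j * c i j = ∑ t, w t * ∑ i, c i (g t i) := by
  simp only [Matrix.sum_apply, Matrix.smul_apply, graphMatrix, Matrix.of_apply, smul_eq_mul,
    Finset.sum_mul, mul_ite, mul_one, mul_zero, ite_mul, zero_mul, Finset.mul_sum]
  rw [Finset.sum_comm]
  simp only [Finset.sum_comm (γ := κ), Finset.sum_ite_eq, mem_univ, if_true]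
  exact Finset.sum_comm

end graphMatrix

lemma graphMatrix_eq_permMatrix {n : Type*} [DecidableEq n] (σ : Equiv.Perm n) :
    graphMatrix σ = σ.permMatrix ℝ := by
  ext i j; simp [graphMatrix, PEquiv.toMatrix_apply]

lemma sum_graphMatrix_succAbove_col {m : ℕ} (k : Fin (m + 1)) (σ : Equiv.Perm (Fin m))
    (j : Fin (m + 1)) :
    ∑ i, graphMatrix (fun i => k.succAbove (σ i)) i j = if k = j then 0 else 1 := by
  have h := Fin.sum_univ_succAbove (fun l => if l = j then (1 : ℝ) else 0) k
  simp only [Finset.sum_ite_eq', mem_univ, if_true] at h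
  simp only [graphMatrix, Matrix.of_apply]
  rw [Equiv.sum_comp σ fun i => if k.succAbove i = j then (1 : ℝ) else 0]
  split_ifs at h ⊢ <;> linarith

lemma exists_perm_weights_of_sums {m : ℕ} {y : Matrix (Fin m) (Fin (m + 1)) ℝ}
    (hy₀ : ∀ i j, 0 ≤ y i j) (hrow : ∀ i, ∑ j, y i j = m + 1) (hcol : ∀ j, ∑ i, y i j = m) :
    ∃ w : Equiv.Perm (Fin (m + 1)) → ℝ, (∀ σ, 0 ≤ w σ) ∧
      (∀ k, ∑ σ, (if σ 0 = k then w σ else 0) = 1) ∧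
      y = ∑ σ, w σ • graphMatrix fun i => σ i.succ := by
  set Y : Matrix (Fin (m + 1)) (Fin (m + 1)) ℝ :=
    Matrix.of (Fin.cons (1 : Fin (m + 1) → ℝ) fun i => y i)
  have hY : (∀ i j, 0 ≤ Y i j) ∧ (∀ i, ∑ j, Y i j = m + 1) ∧ ∀ j, ∑ i, Y i j = m + 1 := by
    refine ⟨fun i j => ?_, fun i => ?_, fun j => ?_⟩
    · cases i using Fin.cases <;> simp [Y, hy₀]
    · cases i using Fin.cases <;> simp [Y, hrow]
    · simp [Y, Fin.sum_univ_succ, hcol, add_comm]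
  obtain ⟨M, hM, hYM⟩ := (exists_mem_doublyStochastic_eq_smul_iff (by positivity)).2 hY
  obtain ⟨w, hw₀, -, hwM⟩ := exists_eq_sum_perm_of_mem_doublyStochastic hM
  have hYw : Y = ∑ σ, ((m + 1 : ℝ) * w σ) • graphMatrix σ := by
    simp only [hYM, ← hwM, Finset.smul_sum, smul_smul, graphMatrix_eq_permMatrix]
  refine ⟨fun σ => (m + 1) * w σ, fun σ => mul_nonneg (by positivity) (hw₀ σ), fun k => ?_, ?_⟩
  · have := congrFun (congrFun hYw 0) k
    simpa [Y, Matrix.sum_apply, graphMatrix] using this.symm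
  · ext i j
    have := congrFun (congrFun hYw i.succ) j
    simpa [Y, Matrix.sum_apply, graphMatrix] using this

section cramerPer

variable {m : ℕ} {C : Matrix (Fin m) (Fin (m + 1)) (WithBot ℝ)}

variable (C) in
lemma sum_le_cramerPer {g : Fin m → Fin (m + 1)} {k : Fin (m + 1)}
    (hg : Function.Injective g) (hk : ∀ i, g i ≠ k) : ∑ i, C i (g i) ≤ cramerPer C k := by
  obtain ⟨π, hπ⟩ := Fin.exists_perm_succAbove_eq hg hk
  have := Finset.le_sup (f := fun σ : Equiv.Perm (Fin m) => ∑ i, C i (k.succAbove (σ i)))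
    (mem_univ π)
  simp only [hπ] at this
  exact this

lemma exists_perm_sum_unbotD_eq_cramerPer {k : Fin (m + 1)} {p : ℝ} (hp : cramerPer C k = p) :
    ∃ σ : Equiv.Perm (Fin m), (∀ i, C i (k.succAbove (σ i)) ≠ ⊥) ∧
      ∑ i, (C i (k.succAbove (σ i))).unbotD 0 = p := by
  obtain ⟨σ, -, hσ⟩ := Finset.exists_mem_eq_sup univ univ_nonempty
    fun σ : Equiv.Perm (Fin m) => ∑ i, C i (k.succAbove (σ i))
  have hfin : ∀ i, C i (k.succAbove (σ i)) ≠ ⊥ := fun i hi =>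
    WithBot.coe_ne_bot (hp.symm.trans (hσ.trans (WithBot.sum_eq_bot_iff.2 ⟨i, mem_univ i, hi⟩)))
  refine ⟨σ, hfin, WithBot.coe_injective ?_⟩
  rw [WithBot.coe_sum, ← hp, cramerPer, hσ]
  exact Finset.sum_congr rfl fun i _ => WithBot.coe_unbotD_of_ne_bot 0 (hfin i)

variable (C) in
lemma sum_le_cramerPer_of_perm (σ : Equiv.Perm (Fin (m + 1))) :
    ∑ i, C i (σ i.succ) ≤ cramerPer C (σ 0) :=
  sum_le_cramerPer C (σ.injective.comp (Fin.succ_injective _)) fun i h =>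
    Fin.succ_ne_zero i (σ.injective h)

end cramerPer

section primal

variable {m : ℕ} {C : Matrix (Fin m) (Fin (m + 1)) (WithBot ℝ)}

variable (C) in
lemma primalFeasible_sum_graphMatrix {T : Type*} [Fintype T] (g : T → Fin m → Fin (m + 1))
    (hT : Fintype.card T = m + 1) (hcol : ∀ j, ∑ t, ∑ i, graphMatrix (g t) i j = m)
    (hfin : ∀ t i, C i (g t i) ≠ ⊥) : primalFeasible C (∑ t, graphMatrix (g t)) := by
  simp only [primalFeasible, Matrix.sum_apply]
  refine ⟨fun i j => Finset.sum_nonneg fun t _ => graphMatrix_nonneg _ _ _, fun i => ?_,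
    fun j => by rw [Finset.sum_comm, hcol], fun i j hij => Finset.sum_eq_zero fun t _ => ?_⟩
  · rw [Finset.sum_comm]
    simp [sum_graphMatrix_row, hT]
  · have : g t i ≠ j := fun h => hfin t i (h ▸ hij)
    simp [graphMatrix, this]

lemma primalFeasible.exists_perm_weights {y : Matrix (Fin m) (Fin (m + 1)) ℝ}
    (hy : primalFeasible C y) :
    ∃ w : Equiv.Perm (Fin (m + 1)) → ℝ, (∀ σ, 0 ≤ w σ) ∧
      (∀ k, ∑ σ, (if σ 0 = k then w σ else 0) = 1) ∧
      (∀ σ, w σ ≠ 0 → ∀ i, C i (σ i.succ) ≠ ⊥) ∧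
      y = ∑ σ, w σ • graphMatrix fun i => σ i.succ := by
  obtain ⟨hy₀, hrow, hcol, hsupp⟩ := hy
  obtain ⟨w, hw₀, hw₁, rfl⟩ := exists_perm_weights_of_sums hy₀ hrow hcol
  refine ⟨w, hw₀, hw₁, fun σ hσ i hbot => hσ (le_antisymm ?_ (hw₀ σ)), rfl⟩
  rw [← hsupp i _ hbot, Matrix.sum_apply]
  calc w σ = (w σ • graphMatrix (fun i => σ i.succ)) i (σ i.succ) := by simp [graphMatrix]
    _ ≤ _ := Finset.single_le_sum (f := fun τ => (w τ • graphMatrix fun i => τ i.succ) i (σ i.succ))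
        (fun τ _ => mul_nonneg (hw₀ τ) (graphMatrix_nonneg _ _ _)) (mem_univ σ)

lemma primalFeasible.cramerPer_ne_bot {y : Matrix (Fin m) (Fin (m + 1)) ℝ}
    (hy : primalFeasible C y) (k : Fin (m + 1)) : cramerPer C k ≠ ⊥ := by
  obtain ⟨w, -, hw₁, hfin, -⟩ := hy.exists_perm_weights
  obtain ⟨σ, -, hσ⟩ := Finset.exists_ne_zero_of_sum_ne_zero ((hw₁ k).symm ▸ one_ne_zero)
  have hσk : σ 0 = k := by by_contra h; simp [h] at hσ
  have hwσ : w σ ≠ 0 := by simpa [hσk] using hσ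
  exact ne_bot_of_le_ne_bot (WithBot.sum_lt_bot fun i _ => hfin σ hwσ i).ne'
    (hσk ▸ sum_le_cramerPer_of_perm C σ)

lemma primalFeasible.sum_mul_le_sum_cramerPer {y : Matrix (Fin m) (Fin (m + 1)) ℝ}
    (hy : primalFeasible C y) {p : Fin (m + 1) → ℝ} (hp : ∀ k, cramerPer C k = p k) :
    ∑ i, ∑ j, y i j * (C i j).unbotD 0 ≤ ∑ k, p k := by
  obtain ⟨w, hw₀, hw₁, hfin, rfl⟩ := hy.exists_perm_weights
  rw [sum_mul_sum_smul_graphMatrix w (fun σ i => σ i.succ) fun i j => (C i j).unbotD 0]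
  calc ∑ σ, w σ * ∑ i, (C i (σ i.succ)).unbotD 0 ≤ ∑ σ, w σ * p (σ 0) := by
        refine Finset.sum_le_sum fun σ _ => ?_
        rcases eq_or_ne (w σ) 0 with h | h
        · simp [h]
        · exact mul_le_mul_of_nonneg_left (WithBot.sum_unbotD_le (fun i _ => hfin σ h i)
            (hp (σ 0) ▸ sum_le_cramerPer_of_perm C σ)) (hw₀ σ)
    _ = ∑ k, p k * ∑ σ, (if σ 0 = k then w σ else 0) := by
        simp only [Finset.mul_sum, mul_ite, mul_zero]
        rw [Finset.sum_comm]
        simp [mul_comm]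
    _ = ∑ k, p k := by simp [hw₁]

lemma primalFeasible_of_cramerPer_ne_bot (h : ∀ k, cramerPer C k ≠ ⊥) :
    ∃ y, primalFeasible C y := by
  choose p hp using fun k => WithBot.ne_bot_iff_exists.mp (h k)
  choose σ hσ _ using fun k => exists_perm_sum_unbotD_eq_cramerPer (hp k).symm
  refine ⟨_, primalFeasible_sum_graphMatrix C (fun (k : Fin (m + 1)) i => k.succAbove (σ k i))
    (by simp) (fun j => ?_) hσ⟩
  simp [sum_graphMatrix_succAbove_col, Finset.sum_ite, Finset.filter_ne']

lemma sum_unbotD_add_le_sum_cramerPer {p : Fin (m + 1) → ℝ} (hp : ∀ k, cramerPer C k = p k)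
    (f : Fin m → Fin (m + 1)) (hf : ∀ i, C i (f i) ≠ ⊥) :
    ∑ i, ((C i (f i)).unbotD 0 + p (f i)) ≤ ∑ k, p k := by
  choose σ hσ hσp using fun k => exists_perm_sum_unbotD_eq_cramerPer (hp k)
  let g : Option (Fin m) → Fin m → Fin (m + 1) :=
    fun t => t.elim f fun i' i => (f i').succAbove (σ (f i') i)
  have hy : primalFeasible C (∑ t, graphMatrix (g t)) := by
    refine primalFeasible_sum_graphMatrix C g (by simp) (fun j => ?_) ?_
    · rw [Fintype.sum_option]
      change ∑ i, graphMatrix f i j +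
        ∑ i', ∑ i, graphMatrix (fun i => (f i').succAbove (σ (f i') i)) i j = m
      simp only [sum_graphMatrix_succAbove_col]
      simp only [graphMatrix, Matrix.of_apply, ← Finset.sum_add_distrib]
      have : ∀ i, (if f i = j then 1 else 0) + (if f i = j then 0 else 1) = (1 : ℝ) := by
        intro i; split_ifs <;> norm_num
      simp [this]
    · rintro (_ | i') i
      exacts [hf i, hσ _ i]
  have hobj := sum_mul_sum_smul_graphMatrix (fun _ => (1 : ℝ)) g fun i j => (C i j).unbotD 0
  simp only [one_smul, one_mul] at hobj
  calc ∑ i, ((C i (f i)).unbotD 0 + p (f i))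
      = ∑ t, ∑ i, (C i (g t i)).unbotD 0 := by
        simp [g, Fintype.sum_option, hσp, Finset.sum_add_distrib]
    _ ≤ ∑ k, p k := hobj ▸ hy.sum_mul_le_sum_cramerPer hp

end primal

lemma dualObj_eq_sum {m : ℕ} (u : Fin m → ℝ) (v : Fin (m + 1) → ℝ) :
    dualObj u v = ∑ k, (∑ i, u i + ∑ j ∈ univ.erase k, v j) := by
  simp only [dualObj, Finset.sum_add_distrib, Finset.sum_erase_eq_sub (mem_univ _),
    Finset.sum_sub_distrib, Finset.sum_const, card_univ, Fintype.card_fin, nsmul_eq_mul]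
  push_cast
  ring

section dual

variable {m : ℕ} {C : Matrix (Fin m) (Fin (m + 1)) (WithBot ℝ)} {u : Fin m → ℝ}
  {v : Fin (m + 1) → ℝ} {p : Fin (m + 1) → ℝ}

lemma dualFeasible.cramerPer_le (h : dualFeasible C u v) (k : Fin (m + 1)) :
    cramerPer C k ≤ ((∑ i, u i + ∑ j ∈ univ.erase k, v j : ℝ) : WithBot ℝ) := by
  refine Finset.sup_le fun σ _ => ?_
  calc ∑ i, C i (k.succAbove (σ i)) ≤ ∑ i, ((u i + v (k.succAbove (σ i)) : ℝ) : WithBot ℝ) :=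
        Finset.sum_le_sum fun i _ => h i _
    _ = _ := by rw [← WithBot.coe_sum, Finset.sum_add_distrib, Fin.sum_succAbove_perm]

lemma dualFeasible.sum_le_dualObj (hp : ∀ k, cramerPer C k = p k) (h : dualFeasible C u v) :
    ∑ k, p k ≤ dualObj u v := by
  rw [dualObj_eq_sum]
  exact Finset.sum_le_sum fun k _ => WithBot.coe_le_coe.1 (hp k ▸ h.cramerPer_le k)

lemma dualFeasible.unbotD_eq_of_sum_eq (h : dualFeasible C u v) {g : Fin m → Fin (m + 1)}
    (hfin : ∀ i, C i (g i) ≠ ⊥)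
    (hsum : ∑ i, (C i (g i)).unbotD 0 = ∑ i, (u i + v (g i))) (i : Fin m) :
    (C i (g i)).unbotD 0 = u i + v (g i) :=
  (Finset.sum_eq_sum_iff_of_le fun i _ =>
    (WithBot.unbotD_le_iff fun h => absurd h (hfin i)).2 (h i (g i))).1 hsum i (mem_univ i)

lemma exists_dualFeasible_eq_cramerPer (hp : ∀ k, cramerPer C k = p k) :
    ∃ u v, dualFeasible C u v ∧ ∀ k, ∑ i, u i + ∑ j ∈ univ.erase k, v j = p k := by
  rcases Nat.eq_zero_or_pos m with rfl | hm
  · refine ⟨0, 0, fun i => i.elim0, fun k => ?_⟩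
    have : p k = 0 := by simpa [cramerPer, eq_comm] using hp k
    simp [this]
  obtain ⟨σ, hσ, -⟩ := exists_perm_sum_unbotD_eq_cramerPer (hp 0)
  choose f _ hf using fun i => Finset.exists_max_image univ (fun j => C i j + p j) univ_nonempty
  have hfin : ∀ i, C i (f i) ≠ ⊥ := fun i hbot => hσ i <| by
    simpa [hbot] using hf i _ (mem_univ (Fin.succAbove 0 (σ i)))
  set M : Fin m → ℝ := fun i => (C i (f i)).unbotD 0 + p (f i)
  have hM : ∀ i j, C i j ≤ ((M i - p j : ℝ) : WithBot ℝ) := fun i j => by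
    have h := hf i j (mem_univ j)
    rw [← WithBot.coe_unbotD_of_ne_bot 0 (hfin i)] at h
    generalize C i j = x at h ⊢
    induction x using WithBot.recBotCoe with
    | bot => exact bot_le
    | coe x => norm_cast at h ⊢; linarith
  have hMp : ∑ i, M i ≤ ∑ k, p k := sum_unbotD_add_le_sum_cramerPer hp f hfin
  set δ := (∑ k, p k - ∑ i, M i) / m
  have hδ : 0 ≤ δ := div_nonneg (by linarith) m.cast_nonneg
  have hmδ : m * δ = ∑ k, p k - ∑ i, M i := mul_div_cancel₀ _ (by positivity)
  refine ⟨fun i => M i + δ, fun j => -p j,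
    fun i j => (hM i j).trans (WithBot.coe_le_coe.2 (by linarith)), fun k => ?_⟩
  rw [Finset.sum_add_distrib, Finset.sum_const, card_univ, Fintype.card_fin, nsmul_eq_mul,
    Finset.sum_neg_distrib, Finset.sum_erase_eq_sub (mem_univ k)]
  linarith

lemma dualOptimal_of_eq_cramerPer (hp : ∀ k, cramerPer C k = p k) (h : dualFeasible C u v)
    (heq : ∀ k, ∑ i, u i + ∑ j ∈ univ.erase k, v j = p k) : dualOptimal C u v :=
  ⟨h, fun _ _ h' => by
    rw [dualObj_eq_sum, Finset.sum_congr rfl fun k _ => heq k]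
    exact h'.sum_le_dualObj hp⟩

lemma dualOptimal.sum_add_sum_erase_eq (hp : ∀ k, cramerPer C k = p k)
    (hopt : dualOptimal C u v) (k : Fin (m + 1)) :
    ∑ i, u i + ∑ j ∈ univ.erase k, v j = p k := by
  obtain ⟨u₀, v₀, h₀, heq₀⟩ := exists_dualFeasible_eq_cramerPer hp
  have hle : ∀ k ∈ univ, p k ≤ ∑ i, u i + ∑ j ∈ univ.erase k, v j := fun k _ =>
    WithBot.coe_le_coe.1 (hp k ▸ hopt.1.cramerPer_le k)
  have hsum : ∑ k, p k = ∑ k, (∑ i, u i + ∑ j ∈ univ.erase k, v j) := by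
    refine le_antisymm (Finset.sum_le_sum hle) ?_
    calc ∑ k, (∑ i, u i + ∑ j ∈ univ.erase k, v j) = dualObj u v := (dualObj_eq_sum u v).symm
      _ ≤ dualObj u₀ v₀ := hopt.2 u₀ v₀ h₀
      _ = ∑ k, p k := by rw [dualObj_eq_sum]; exact Finset.sum_congr rfl fun k _ => heq₀ k
  exact ((Finset.sum_eq_sum_iff_of_le hle).1 hsum k (mem_univ k)).symm

lemma dualOptimal.exists_shift (hp : ∀ k, cramerPer C k = p k) (hopt : dualOptimal C u v)
    {u' : Fin m → ℝ} {v' : Fin (m + 1) → ℝ} (hopt' : dualOptimal C u' v') :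
    ∃ t : ℝ, (∀ i, u' i = u i + t) ∧ ∀ j, v' j = v j - t := by
  set t := (∑ i, u i + ∑ j, v j) - (∑ i, u' i + ∑ j, v' j)
  have hv : ∀ j, v' j = v j - t := fun j => by
    have h := hopt.sum_add_sum_erase_eq hp j
    have h' := hopt'.sum_add_sum_erase_eq hp j
    rw [Finset.sum_erase_eq_sub (mem_univ j)] at h h'
    linarith
  refine ⟨t, fun i => ?_, hv⟩
  obtain ⟨σ, hσ, hσp⟩ := exists_perm_sum_unbotD_eq_cramerPer (hp 0)
  have hslack : ∀ {u v}, dualOptimal C u v → ∀ i,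
      (C i (Fin.succAbove 0 (σ i))).unbotD 0 = u i + v (Fin.succAbove 0 (σ i)) :=
    fun hopt => hopt.1.unbotD_eq_of_sum_eq hσ (by
      rw [hσp, Finset.sum_add_distrib, Fin.sum_succAbove_perm, hopt.sum_add_sum_erase_eq hp])
  linarith [hslack hopt i, hslack hopt' i, hv (Fin.succAbove 0 (σ i))]

end dual

/-- The transportation approach to tropical Cramer permanents: the primal transportation
problem is feasible iff all the tropical Cramer permanents of `C` are finite; in that
case the dual problem has an optimal solution, optimal dual solutions are unique up to
an additive constant `t` (added to `u` and subtracted from `v`), and every optimal dual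
solution `(u, v)` recovers the Cramer permanents:
`per C_{|k)} = Σ_i u_i + Σ_{j ≠ k} v_j`. -/
theorem stmt18 (m : ℕ) (C : Matrix (Fin m) (Fin (m + 1)) (WithBot ℝ)) :
    ((∃ y : Matrix (Fin m) (Fin (m + 1)) ℝ, primalFeasible C y) ↔
      ∀ k, cramerPer C k ≠ ⊥) ∧
    ((∀ k, cramerPer C k ≠ ⊥) →
      (∃ u v, dualOptimal C u v) ∧
      (∀ u v u' v', dualOptimal C u v → dualOptimal C u' v' →
        ∃ t : ℝ, (∀ i, u' i = u i + t) ∧ ∀ j, v' j = v j - t) ∧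
      ∀ u v, dualOptimal C u v → ∀ k : Fin (m + 1),
        cramerPer C k =
          ((∑ i, u i + ∑ j ∈ Finset.univ.erase k, v j : ℝ) : WithBot ℝ)) := by
  refine ⟨⟨fun ⟨y, hy⟩ => hy.cramerPer_ne_bot, primalFeasible_of_cramerPer_ne_bot⟩, fun h => ?_⟩
  choose p hp using fun k => WithBot.ne_bot_iff_exists.mp (h k)
  replace hp : ∀ k, cramerPer C k = p k := fun k => (hp k).symm
  obtain ⟨u₀, v₀, h₀, heq₀⟩ := exists_dualFeasible_eq_cramerPer hp
  refine ⟨⟨u₀, v₀, dualOptimal_of_eq_cramerPer hp h₀ heq₀⟩,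
    fun u v u' v' hopt hopt' => hopt.exists_shift hp hopt', fun u v hopt k => ?_⟩
  rw [hp k, hopt.sum_add_sum_erase_eq hp k]
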